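/- Violation of the asymmetry of the second kind: let B_1 = (S_{1l}, T_1, X_1++X', S) and B_2 = (S, T_2, X'⁻¹++X_2, S_{2r}), where X'⁻¹ is the formal inverse of the crossing sequence X', and let the exchanged twist triples of the right and left exchange interactions be related by T' = −T. Then the right exchange interaction with data (X_1, X', T) and the left exchange interaction with data (X'⁻¹, T') produce outputs that agree: all end-node states coincide, all twist triples coincide, and the respective crossing sequences X_1 versus X_1++X'++X'⁻¹, and X'++X'⁻¹++X_2 versus X_2, have equal images under the homomorphism into the free group on two generators a, b sending u ↦ a, u⁻¹ ↦ a⁻¹, d ↦ b, d⁻¹ ↦ b⁻¹. -/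
import Mathlib


/-- A crossing generator: one of the four symbols `u`, `d`, `u⁻¹`, `d⁻¹`. -/
inductive CrossGen : Type
  | u : CrossGen
  | d : CrossGen
  | uInv : CrossGen
  | dInv : CrossGen
deriving DecidableEq

/-- The crossing value: `+1` for `u` and `d`, `-1` for `u⁻¹` and `d⁻¹`. -/
def crossVal : CrossGen → ℤ
  | .u => 1
  | .d => 1
  | .uInv => -1
  | .dInv => -1

/-- The transposition of `{1,2,3}` induced by a crossing generator:
`u, u⁻¹ ↦ (1 2)` and `d, d⁻¹ ↦ (2 3)`. -/
def genPerm : CrossGen → Equiv.Perm (Fin 3)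
  | .u => Equiv.swap 0 1
  | .uInv => Equiv.swap 0 1
  | .d => Equiv.swap 1 2
  | .dInv => Equiv.swap 1 2

/-- The permutation induced by a crossing sequence; the head of the list acts first. -/
def seqPerm : List CrossGen → Equiv.Perm (Fin 3)
  | [] => 1
  | x :: xs => seqPerm xs * genPerm x

/-- The crossing number `c(X)`: the sum of the crossing values of the entries. -/
def crossSum (X : List CrossGen) : ℤ := (X.map crossVal).sum

/-- The action `σ • T` of a permutation of `{1,2,3}` on a twist triple `T ∈ ℤ³`,
permuting the entries. -/
def permAct (σ : Equiv.Perm (Fin 3)) (T : Fin 3 → ℤ) : Fin 3 → ℤ :=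
  fun i => T (σ⁻¹ i)

/-- A braid (in unique representation): a quadruple `(S_l, T, X, S_r)` of a left
end-node state, an internal twist triple, a crossing sequence and a right
end-node state. -/
structure Braid : Type where
  Sl : ℤ
  T : Fin 3 → ℤ
  X : List CrossGen
  Sr : ℤ

/-- The effective twist `Θ(B) = T₁ + T₂ + T₃ − 2 c(X)`. -/
def effTwist (B : Braid) : ℤ := B.T 0 + B.T 1 + B.T 2 - 2 * crossSum B.X

/-- The effective state `χ(B) = (−1)^{|X|} S_l S_r`. -/
def effState (B : Braid) : ℤ := (-1) ^ B.X.length * B.Sl * B.Sr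

/-- The inverse of a crossing generator: same letter, opposite crossing value. -/
def genInv : CrossGen → CrossGen
  | .u => .uInv
  | .uInv => .u
  | .d => .dInv
  | .dInv => .d

/-- The formal inverse `X⁻¹` of a crossing sequence: the reversed list with each
generator replaced by its inverse. -/
def seqInv (X : List CrossGen) : List CrossGen := X.reverse.map genInv

/-- The image of a crossing generator in the free group on two generators `a, b`:
`u ↦ a`, `u⁻¹ ↦ a⁻¹`, `d ↦ b`, `d⁻¹ ↦ b⁻¹`. -/
def genFree : CrossGen → FreeGroup (Fin 2)
  | .u => FreeGroup.of 0
  | .uInv => (FreeGroup.of 0)⁻¹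
  | .d => FreeGroup.of 1
  | .dInv => (FreeGroup.of 1)⁻¹

/-- The image of a crossing sequence under the homomorphism into the free group
on two generators. -/
def seqFree (X : List CrossGen) : FreeGroup (Fin 2) := (X.map genFree).prod


lemma genPerm_genInv (x : CrossGen) : genPerm (genInv x) = genPerm x := by
  cases x <;> rfl

lemma genPerm_sq (x : CrossGen) : genPerm x * genPerm x = 1 := by
  cases x <;> simp [genPerm, Equiv.swap_mul_self]

lemma seqPerm_append (X Y : List CrossGen) :
    seqPerm (X ++ Y) = seqPerm Y * seqPerm X := by
  induction X with
  | nil => simp [seqPerm]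
  | cons x xs ih => simp [seqPerm, ih, mul_assoc]

lemma seqPerm_seqInv (X : List CrossGen) :
    seqPerm (seqInv X) = (seqPerm X)⁻¹ := by
  induction X with
  | nil => simp [seqInv, seqPerm]
  | cons x xs ih =>
    have h : seqInv (x :: xs) = seqInv xs ++ [genInv x] := by
      simp [seqInv]
    rw [h, seqPerm_append, ih]
    have : seqPerm [genInv x] = genPerm x := by
      simp [seqPerm, genPerm_genInv]
    rw [this, seqPerm]
    rw [mul_inv_rev]
    congr 1
    exact eq_inv_of_mul_eq_one_left (genPerm_sq x)

lemma genFree_genInv (x : CrossGen) : genFree (genInv x) = (genFree x)⁻¹ := by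
  cases x <;> simp [genInv, genFree]

lemma seqFree_append (X Y : List CrossGen) :
    seqFree (X ++ Y) = seqFree X * seqFree Y := by
  simp [seqFree]

lemma seqFree_seqInv (X : List CrossGen) :
    seqFree (seqInv X) = (seqFree X)⁻¹ := by
  induction X with
  | nil => simp [seqInv, seqFree]
  | cons x xs ih =>
    have h : seqInv (x :: xs) = seqInv xs ++ [genInv x] := by simp [seqInv]
    rw [h, seqFree_append, ih]
    have h2 : seqFree [genInv x] = (genFree x)⁻¹ := by
      simp [seqFree, genFree_genInv]
    have h3 : seqFree (x :: xs) = genFree x * seqFree xs := by simp [seqFree]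
    rw [h2, h3, mul_inv_rev]


/-- Violation of the asymmetry of the second kind: for `B₁ = (S₁ₗ, T₁, X₁ ++ X', S)`
and `B₂ = (S, T₂, X'⁻¹ ++ X₂, S₂ᵣ)`, with exchanged twist triples related by
`T' = −T`, the right exchange interaction with data `(X₁, X', T)` and the left
exchange interaction with data `(X'⁻¹, T')` produce outputs that agree: all
end-node states coincide, all twist triples coincide, and the respective crossing
sequences have equal images in the free group on two generators. -/

theorem exchange_second_kind_symmetric_case
    (S1l S S2r : ℤ) (hS1l : S1l = 1 ∨ S1l = -1) (hS : S = 1 ∨ S = -1)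
    (hS2r : S2r = 1 ∨ S2r = -1)
    (T1 T2 T T' : Fin 3 → ℤ) (X1 X' X2 : List CrossGen)
    (hT' : T' = -T) :
    ((-1 : ℤ) ^ X'.length * S = (-1) ^ (seqInv X').length * S)
    ∧ (T1 - permAct (seqPerm X1)⁻¹ T
        = T1 + permAct (seqPerm ((X1 ++ X') ++ seqInv X'))⁻¹ T')
    ∧ (T + permAct (seqPerm X')⁻¹ T2
        = permAct (seqPerm (seqInv X')) T2 - T')
    ∧ (seqFree X1 = seqFree ((X1 ++ X') ++ seqInv X'))
    ∧ (seqFree (X' ++ (seqInv X' ++ X2)) = seqFree X2) := by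
  subst hT'
  have hlen : (seqInv X').length = X'.length := by simp [seqInv]
  have hperm : seqPerm ((X1 ++ X') ++ seqInv X') = seqPerm X1 := by
    rw [seqPerm_append, seqPerm_append, seqPerm_seqInv]
    group
  refine ⟨by rw [hlen], ?_, ?_, ?_, ?_⟩
  · rw [hperm]
    funext i
    simp [permAct]
    ring
  · rw [seqPerm_seqInv]
    funext i
    simp [permAct]
    ring
  · rw [seqFree_append, seqFree_append, seqFree_seqInv]
    group
  · rw [seqFree_append, seqFree_append, seqFree_seqInv]
    group
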